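/- arXiv:1906.01368 — 2 statements merged into one kernel-verified Lean document; each statement's English description precedes it below -/
import Mathlib

section
/- Let s : ℝ≥0 → ℝ be a C¹ function satisfying s(0) = s⁰ with s_m < s⁰ ≤ S, and suppose for all t ≥ 0: γ s(t) log(s_m / s(t)) ≤ s'(t) ≤ γ s(t) log(S / s(t)), where γ > 0 and s_m < S. If s(t) > 0 for all t, then s_m · exp(−e^{−γ t} log(s_m/s⁰)) ≤ s(t) ≤ S · exp(−e^{−γ t} log(S/s⁰)) for all t ≥ 0; in particular s_m < s(t) ≤ S for all t ≥ 0. -/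
open Real

/-!
With `r = log s` the two differential inequalities become the linear ones
`γ (log s_m - r) ≤ r' ≤ γ (log S - r)`. For `K = s_m` and `K = S`, Grönwall's lemma therefore
compares `r - log K` with the solution `(r 0 - log K) e^{-γ t}` of `u' = -γ u`. Exponentiating
the two resulting bounds gives exactly the Gompertz curves through `s⁰` with carrying capacities
`s_m` and `S`, and these stay on the same side of their capacity as `s⁰`.
-/

noncomputable def gompertzCurve (K s₀ γ t : ℝ) : ℝ :=
  K * exp (-exp (-(γ * t)) * log (K / s₀))

theorem gompertzCurve_eq_exp {K s₀ : ℝ} (hK : 0 < K) (hs₀ : 0 < s₀) (γ t : ℝ) :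
    gompertzCurve K s₀ γ t = exp (log K + (log s₀ - log K) * exp (-(γ * t))) := by
  rw [gompertzCurve, exp_add, exp_log hK, log_div hK.ne' hs₀.ne']
  ring_nf

theorem gompertzCurve_le_of_le {K s₀ : ℝ} (hK : 0 ≤ K) (hs₀ : 0 < s₀) (hs₀K : s₀ ≤ K)
    (γ t : ℝ) : gompertzCurve K s₀ γ t ≤ K := by
  have hlog : 0 ≤ log (K / s₀) := log_nonneg ((one_le_div hs₀).2 hs₀K)
  have hexp : exp (-exp (-(γ * t)) * log (K / s₀)) ≤ 1 :=
    exp_le_one_iff.2 (mul_nonpos_of_nonpos_of_nonneg (neg_nonpos.2 (exp_pos _).le) hlog)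
  simpa [gompertzCurve] using mul_le_mul_of_nonneg_left hexp hK

theorem lt_gompertzCurve_of_lt {K s₀ : ℝ} (hK : 0 < K) (hKs₀ : K < s₀) (γ t : ℝ) :
    K < gompertzCurve K s₀ γ t := by
  have hs₀ : 0 < s₀ := hK.trans hKs₀
  have hlog : log (K / s₀) < 0 := log_neg (div_pos hK hs₀) ((div_lt_one hs₀).2 hKs₀)
  have hexp : 1 < exp (-exp (-(γ * t)) * log (K / s₀)) :=
    one_lt_exp_iff.2 (mul_pos_of_neg_of_neg (neg_neg_of_pos (exp_pos _)) hlog)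
  simpa [gompertzCurve] using mul_lt_mul_of_pos_left hexp hK

section Relaxation

variable {r r' : ℝ → ℝ} {γ c : ℝ}

theorem le_of_deriv_le_mul_sub (hr : ∀ t, 0 ≤ t → HasDerivAt r (r' t) t)
    (hbound : ∀ t, 0 ≤ t → r' t ≤ γ * (c - r t)) {t : ℝ} (ht : 0 ≤ t) :
    r t ≤ c + (r 0 - c) * exp (-(γ * t)) := by
  have hgronwall := le_gronwallBound_of_liminf_deriv_right_le (f := fun t => r t - c) (f' := r')
    (δ := r 0 - c) (K := -γ) (ε := 0) (a := 0) (b := t)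
    (fun x hx => ((hr x hx.1).continuousAt.sub continuousAt_const).continuousWithinAt)
    (fun x hx _ h => ((hr x hx.1).sub_const c).hasDerivWithinAt.liminf_right_slope_le h)
    le_rfl (fun x hx => by linarith [hbound x hx.1]) t ⟨ht, le_rfl⟩
  rw [gronwallBound_ε0, sub_zero, neg_mul] at hgronwall
  linarith

theorem le_of_mul_sub_le_deriv (hr : ∀ t, 0 ≤ t → HasDerivAt r (r' t) t)
    (hbound : ∀ t, 0 ≤ t → γ * (c - r t) ≤ r' t) {t : ℝ} (ht : 0 ≤ t) :
    c + (r 0 - c) * exp (-(γ * t)) ≤ r t := by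
  have := le_of_deriv_le_mul_sub (r := fun t => -r t) (r' := fun t => -r' t) (γ := γ) (c := -c)
    (fun t ht => (hr t ht).neg) (fun t ht => by linarith [hbound t ht]) ht
  linarith

end Relaxation

section Gompertz

variable {s s' : ℝ → ℝ} {γ K : ℝ}

theorem le_gompertzCurve_of_deriv_le (hK : 0 < K)
    (hs : ∀ t, 0 ≤ t → HasDerivAt s (s' t) t) (hpos : ∀ t, 0 ≤ t → 0 < s t)
    (hbound : ∀ t, 0 ≤ t → s' t ≤ γ * s t * log (K / s t))
    {t : ℝ} (ht : 0 ≤ t) : s t ≤ gompertzCurve K (s 0) γ t := by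
  have hlog := le_of_deriv_le_mul_sub (γ := γ) (c := log K)
    (fun t ht => (hs t ht).log (hpos t ht).ne')
    (fun t ht => by
      rw [div_le_iff₀ (hpos t ht), ← log_div hK.ne' (hpos t ht).ne']
      linarith [hbound t ht]) ht
  rw [gompertzCurve_eq_exp hK (hpos 0 le_rfl), ← exp_log (hpos t ht)]
  exact exp_le_exp.2 hlog

theorem gompertzCurve_le_of_le_deriv (hK : 0 < K)
    (hs : ∀ t, 0 ≤ t → HasDerivAt s (s' t) t) (hpos : ∀ t, 0 ≤ t → 0 < s t)
    (hbound : ∀ t, 0 ≤ t → γ * s t * log (K / s t) ≤ s' t)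
    {t : ℝ} (ht : 0 ≤ t) : gompertzCurve K (s 0) γ t ≤ s t := by
  have hlog := le_of_mul_sub_le_deriv (γ := γ) (c := log K)
    (fun t ht => (hs t ht).log (hpos t ht).ne')
    (fun t ht => by
      rw [le_div_iff₀ (hpos t ht), ← log_div hK.ne' (hpos t ht).ne']
      linarith [hbound t ht]) ht
  rw [gompertzCurve_eq_exp hK (hpos 0 le_rfl), ← exp_log (hpos t ht)]
  exact exp_le_exp.2 hlog

end Gompertz

theorem gompertz_comparison_general
    (sm S γ s0 : ℝ) (hsm : 0 < sm)
    (hs0 : sm < s0) (hs0' : s0 ≤ S)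
    (s s' : ℝ → ℝ)
    (hderiv : ∀ t, 0 ≤ t → HasDerivAt s (s' t) t)
    (hpos : ∀ t, 0 ≤ t → 0 < s t)
    (h0 : s 0 = s0)
    (hlow : ∀ t, 0 ≤ t → γ * s t * Real.log (sm / s t) ≤ s' t)
    (hhigh : ∀ t, 0 ≤ t → s' t ≤ γ * s t * Real.log (S / s t)) :
    ∀ t, 0 ≤ t →
      (sm * Real.exp (-(Real.exp (-(γ * t))) * Real.log (sm / s0)) ≤ s t ∧
       s t ≤ S * Real.exp (-(Real.exp (-(γ * t))) * Real.log (S / s0)) ∧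
       sm < s t ∧ s t ≤ S) := by
  subst h0
  intro t ht
  have hS : 0 < S := hsm.trans_le (hs0.le.trans hs0')
  have hlower := gompertzCurve_le_of_le_deriv hsm hderiv hpos hlow ht
  have hupper := le_gompertzCurve_of_deriv_le hS hderiv hpos hhigh ht
  exact ⟨hlower, hupper, (lt_gompertzCurve_of_lt hsm hs0 γ t).trans_le hlower,
    hupper.trans (gompertzCurve_le_of_le hS.le (hpos 0 le_rfl) hs0' γ t)⟩

/-- Comparison principle: a positive `C¹` function whose derivative is squeezed between
two Gompertz-type rates stays between the corresponding Gompertz trajectories; in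
particular `s_m < s(t) ≤ S` for all `t ≥ 0`. -/
theorem gompertz_comparison
    (sm S γ s0 : ℝ) (hsm : 0 < sm) (hsmS : sm < S) (hγ : 0 < γ)
    (hs0 : sm < s0) (hs0' : s0 ≤ S)
    (s s' : ℝ → ℝ)
    (hderiv : ∀ t, 0 ≤ t → HasDerivAt s (s' t) t)
    (hcont : ContinuousOn s' (Set.Ici (0 : ℝ)))
    (hpos : ∀ t, 0 ≤ t → 0 < s t)
    (h0 : s 0 = s0)
    (hlow : ∀ t, 0 ≤ t → γ * s t * Real.log (sm / s t) ≤ s' t)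
    (hhigh : ∀ t, 0 ≤ t → s' t ≤ γ * s t * Real.log (S / s t)) :
    ∀ t, 0 ≤ t →
      (sm * Real.exp (-(Real.exp (-(γ * t))) * Real.log (sm / s0)) ≤ s t ∧
       s t ≤ S * Real.exp (-(Real.exp (-(γ * t))) * Real.log (S / s0)) ∧
       sm < s t ∧ s t ≤ S) :=
  gompertz_comparison_general sm S γ s0 hsm hs0 hs0' s s' hderiv hpos h0 hlow hhigh
end

section
/- Let g : Z² → X satisfy |g(z, z')| ≤ K₁(1 + |X-component of z| + |X-component of z'|), let μ₀ be a probability measure on Z with finite first moment M¹ = ∫|z| dμ₀(z), and let f ∈ 𝒴 with ‖f‖_𝒴 ≤ R. Then the map Φ_α(f)(t, X, θ) = X + ∫₀ᵗ ∫_Z g(f(s, X, θ), θ, f(s, X', θ'), θ') dμ₀(X', θ') ds satisfies, for |t| ≤ α: ‖Φ_α(f)(t, ·)‖_𝒴 ≤ 1 + K₁ α (1 + (2 + M¹) R). -/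
/-!
Under (A1) the integrand of `Φ_α(f)(t, z)` grows at most affinely in `|z'|` once `f(s,·)` is
bounded in `𝒴`, so integrating against `μ₀` costs the factor `1 + M¹`, and the time integral
over `[0, t]` costs the factor `|t| ≤ α`.
-/

open Real MeasureTheory

section

variable {Z E : Type*} [NormedAddCommGroup Z] [MeasurableSpace Z]
  [NormedAddCommGroup E] [NormedSpace ℝ E]

theorem norm_integral_le_of_norm_le_affine {μ : Measure Z} [IsProbabilityMeasure μ]
    (hμ : Integrable (fun z => ‖z‖) μ) {F : Z → E} {a b : ℝ}
    (hF : ∀ z, ‖F z‖ ≤ a + b * (1 + ‖z‖)) :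
    ‖∫ z, F z ∂μ‖ ≤ a + b * (1 + ∫ z, ‖z‖ ∂μ) := by
  have h_one_add : Integrable (fun z => 1 + ‖z‖) μ := (integrable_const 1).add hμ
  calc ‖∫ z, F z ∂μ‖
      ≤ ∫ z, a + b * (1 + ‖z‖) ∂μ :=
        norm_integral_le_of_norm_le ((integrable_const a).add (h_one_add.const_mul b))
          (.of_forall hF)
    _ = a + b * (1 + ∫ z, ‖z‖ ∂μ) := by
        rw [integral_add (integrable_const a) (h_one_add.const_mul b), integral_const_mul,
          integral_add (integrable_const 1) hμ]
        simp

theorem norm_intervalIntegral_zero_le_of_forall_abs_le {F : ℝ → E} {C α t : ℝ}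
    (hF : ∀ s, |s| ≤ α → ‖F s‖ ≤ C) (ht : |t| ≤ α) :
    ‖∫ s in (0 : ℝ)..t, F s‖ ≤ C * α := by
  have hC : 0 ≤ C := (norm_nonneg _).trans (hF 0 (by simpa using (abs_nonneg t).trans ht))
  calc ‖∫ s in (0 : ℝ)..t, F s‖
      ≤ C * |t - 0| := intervalIntegral.norm_integral_le_of_norm_le_const fun s hs =>
        hF s (le_trans (by simpa using Set.abs_sub_left_of_mem_uIcc (Set.uIoc_subset_uIcc hs)) ht)
    _ ≤ C * α := mul_le_mul_of_nonneg_left (by simpa using ht) hC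

end

theorem norm_integral_interaction_le {X Θ : Type*} [NormedAddCommGroup X] [NormedSpace ℝ X]
    [NormedAddCommGroup Θ] [MeasurableSpace (X × Θ)] {μ : Measure (X × Θ)}
    [IsProbabilityMeasure μ] (hμ : Integrable (fun z => ‖z‖) μ)
    {g : X → Θ → X → Θ → X} {K : ℝ} (hg : ∀ x θ x' θ', ‖g x θ x' θ'‖ ≤ K * (1 + ‖x‖ + ‖x'‖))
    {u : X × Θ → X} {R : ℝ} (hu : ∀ z, ‖u z‖ ≤ R * (1 + ‖z‖)) (z : X × Θ) :
    ‖∫ z', g (u z) z.2 (u z') z'.2 ∂μ‖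
      ≤ K * (1 + (2 + ∫ z', ‖z'‖ ∂μ) * R) * (1 + ‖z‖) := by
  have hK : 0 ≤ K := by simpa using (norm_nonneg _).trans (hg 0 z.2 0 z.2)
  have hR : 0 ≤ R := by simpa using (norm_nonneg _).trans (hu 0)
  have hM : 0 ≤ ∫ z', ‖z'‖ ∂μ := integral_nonneg fun _ => norm_nonneg _
  have hz := norm_nonneg z
  have hgu : ∀ z', ‖g (u z) z.2 (u z') z'.2‖ ≤ K * (1 + ‖u z‖) + K * R * (1 + ‖z'‖) := by
    intro z'
    have := mul_le_mul_of_nonneg_left (hu z') hK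
    linarith [hg (u z) z.2 (u z') z'.2]
  calc ‖∫ z', g (u z) z.2 (u z') z'.2 ∂μ‖
      ≤ K * (1 + ‖u z‖) + K * R * (1 + ∫ z', ‖z'‖ ∂μ) :=
        norm_integral_le_of_norm_le_affine hμ hgu
    _ ≤ K * (1 + (2 + ∫ z', ‖z'‖ ∂μ) * R) * (1 + ‖z‖) := by
        have := mul_le_mul_of_nonneg_left (hu z) hK
        nlinarith [mul_nonneg hK hz, mul_nonneg (mul_nonneg hK hR) hz,
          mul_nonneg (mul_nonneg (mul_nonneg hK hR) hM) hz]

theorem picard_map_bound_general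
    (dX dΘ : ℕ)
    (g : EuclideanSpace ℝ (Fin dX) → EuclideanSpace ℝ (Fin dΘ) →
         EuclideanSpace ℝ (Fin dX) → EuclideanSpace ℝ (Fin dΘ) →
         EuclideanSpace ℝ (Fin dX))
    (K₁ : ℝ)
    (hA1 : ∀ X₁ θ₁ X₂ θ₂, ‖g X₁ θ₁ X₂ θ₂‖ ≤ K₁ * (1 + ‖X₁‖ + ‖X₂‖))
    (μ₀ : Measure (EuclideanSpace ℝ (Fin dX) × EuclideanSpace ℝ (Fin dΘ)))
    [IsProbabilityMeasure μ₀]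
    (hM : Integrable (fun z => ‖z‖) μ₀)
    (M₁ : ℝ) (hM₁ : M₁ = ∫ z, ‖z‖ ∂μ₀)
    (α R : ℝ)
    (f : ℝ → (EuclideanSpace ℝ (Fin dX) × EuclideanSpace ℝ (Fin dΘ)) →
         EuclideanSpace ℝ (Fin dX))
    (hfR : ∀ t, |t| ≤ α → ∀ z, ‖f t z‖ ≤ R * (1 + ‖z‖)) :
    ∀ t, |t| ≤ α → ∀ z : EuclideanSpace ℝ (Fin dX) × EuclideanSpace ℝ (Fin dΘ),
      ‖z.1 + ∫ s in (0:ℝ)..t, (∫ z', g (f s z) z.2 (f s z') z'.2 ∂μ₀)‖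
        ≤ (1 + K₁ * α * (1 + (2 + M₁) * R)) * (1 + ‖z‖) := by
  intro t ht z
  subst hM₁
  have h_time := norm_intervalIntegral_zero_le_of_forall_abs_le
    (fun s hs => norm_integral_interaction_le hM hA1 (hfR s hs) z) ht
  calc ‖z.1 + ∫ s in (0:ℝ)..t, (∫ z', g (f s z) z.2 (f s z') z'.2 ∂μ₀)‖
      ≤ ‖z‖ + K₁ * (1 + (2 + ∫ z', ‖z'‖ ∂μ₀) * R) * (1 + ‖z‖) * α :=
        (norm_add_le _ _).trans (add_le_add (norm_fst_le z) h_time)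
    _ ≤ (1 + K₁ * α * (1 + (2 + ∫ z', ‖z'‖ ∂μ₀) * R)) * (1 + ‖z‖) := by
        linarith [show (1 + K₁ * α * (1 + (2 + ∫ z', ‖z'‖ ∂μ₀) * R)) * (1 + ‖z‖)
          = 1 + ‖z‖ + K₁ * (1 + (2 + ∫ z', ‖z'‖ ∂μ₀) * R) * (1 + ‖z‖) * α by ring]

/-- A priori bound for the Picard map `Φ_α`: if `‖f(t,·)‖_𝒴 ≤ R` for `|t| ≤ α`, `g`
satisfies (A1) with constant `K₁`, and `μ₀` is a probability measure with first moment
`M¹`, then `‖Φ_α(f)(t,·)‖_𝒴 ≤ 1 + K₁ α (1 + (2 + M¹) R)` for `|t| ≤ α`. -/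
theorem picard_map_bound
    (dX dΘ : ℕ)
    (g : EuclideanSpace ℝ (Fin dX) → EuclideanSpace ℝ (Fin dΘ) →
         EuclideanSpace ℝ (Fin dX) → EuclideanSpace ℝ (Fin dΘ) →
         EuclideanSpace ℝ (Fin dX))
    (hgmeas : Measurable (fun p : (EuclideanSpace ℝ (Fin dX) × EuclideanSpace ℝ (Fin dΘ)) ×
        (EuclideanSpace ℝ (Fin dX) × EuclideanSpace ℝ (Fin dΘ)) =>
        g p.1.1 p.1.2 p.2.1 p.2.2))
    (K₁ : ℝ) (hK₁ : 0 < K₁)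
    (hA1 : ∀ X₁ θ₁ X₂ θ₂, ‖g X₁ θ₁ X₂ θ₂‖ ≤ K₁ * (1 + ‖X₁‖ + ‖X₂‖))
    (μ₀ : Measure (EuclideanSpace ℝ (Fin dX) × EuclideanSpace ℝ (Fin dΘ)))
    [IsProbabilityMeasure μ₀]
    (hM : Integrable (fun z => ‖z‖) μ₀)
    (M₁ : ℝ) (hM₁ : M₁ = ∫ z, ‖z‖ ∂μ₀)
    (α R : ℝ) (hα : 0 < α) (hR : 1 < R)
    (f : ℝ → (EuclideanSpace ℝ (Fin dX) × EuclideanSpace ℝ (Fin dΘ)) →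
         EuclideanSpace ℝ (Fin dX))
    (hfcont : Continuous (fun p : ℝ × (EuclideanSpace ℝ (Fin dX) × EuclideanSpace ℝ (Fin dΘ))
        => f p.1 p.2))
    (hfR : ∀ t, |t| ≤ α → ∀ z, ‖f t z‖ ≤ R * (1 + ‖z‖)) :
    ∀ t, |t| ≤ α → ∀ z : EuclideanSpace ℝ (Fin dX) × EuclideanSpace ℝ (Fin dΘ),
      ‖z.1 + ∫ s in (0:ℝ)..t, (∫ z', g (f s z) z.2 (f s z') z'.2 ∂μ₀)‖
        ≤ (1 + K₁ * α * (1 + (2 + M₁) * R)) * (1 + ‖z‖) :=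
  picard_map_bound_general dX dΘ g K₁ hA1 μ₀ hM M₁ hM₁ α R f hfR
end
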